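/- Let p ≥ 2 and let D = ⋃_{m∈ℕ} { i/(p^m − 1) : i ∈ {0, …, p^m − 2} }. If φ : [0,1] → [0,1] is non-decreasing, left-continuous, φ(0) = 0, φ(1) = 1, and satisfies φ(x) = Σ_{k=0}^{p−1}[φ((x+k)/p) − φ(k/p)] for all x ∈ [0,1], then φ is continuous at every point of [0,1] \ D. -/

import Mathlib

/-- The set D = ⋃_{m≥1} { i/(p^m - 1) : 0 ≤ i ≤ p^m - 2 }. -/
def padicD (p : ℕ) : Set ℝ :=
  {x | ∃ m : ℕ, 1 ≤ m ∧ ∃ i : ℕ, i ≤ p ^ m - 2 ∧ x = (i : ℝ) / ((p : ℝ) ^ m - 1)}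

/-!
Iterating the functional equation `m` times splits the increment `φ y - φ x` into the increments of
`φ` over the `p ^ m` intervals `[(x + r) / p ^ m, (y + r) / p ^ m]`. When `x ∉ D` the left endpoints
`(x + r) / p ^ m` are pairwise distinct over all levels `m` (a coincidence between two levels
exhibits `x` as an element of `D`), so for `y` close enough to `x` the intervals of the levels
`1, …, M` are pairwise disjoint. Monotonicity then gives `M (φ y - φ x) ≤ φ 1 - φ 0` for every `M`,
so `φ` is right continuous at `x`, and continuity follows from left continuity.
-/

open Finset Set Filter Topology

theorem MonotoneOn.sum_sub_le_sub {ι α β : Type*} [LinearOrder α] [AddCommGroup β] [PartialOrder β]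
    [IsOrderedAddMonoid β] {f : α → β} {a c : α} (hf : MonotoneOn f (Icc a c)) (hac : a ≤ c)
    (s : Finset ι) {l u : ι → α} (hlu : ∀ i ∈ s, a ≤ l i ∧ l i ≤ u i ∧ u i ≤ c)
    (hdisj : (s : Set ι).Pairwise fun i j => u i < l j ∨ u j < l i) :
    ∑ i ∈ s, (f (u i) - f (l i)) ≤ f c - f a := by
  classical
  induction s using Finset.induction_on_max_value l generalizing c with
  | empty => simpa using hf (left_mem_Icc.2 hac) (right_mem_Icc.2 hac) hac
  | insert i s his hmax ih =>
    obtain ⟨hai, hiu, huc⟩ := hlu i (mem_insert_self i s)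
    have hs : ∀ j ∈ s, a ≤ l j ∧ l j ≤ u j ∧ u j ≤ l i := fun j hj => by
      obtain ⟨haj, hju, -⟩ := hlu j (mem_insert_of_mem hj)
      refine ⟨haj, hju, ?_⟩
      rcases hdisj (mem_insert_of_mem hj) (mem_insert_self i s) (ne_of_mem_of_not_mem hj his)
        with h | h
      · exact h.le
      · exact absurd (hmax j hj) (not_le.2 (hiu.trans_lt h))
    have hsum := ih (hf.mono (Icc_subset_Icc_right (hiu.trans huc))) hai hs
      (hdisj.mono (by simp))
    calc ∑ j ∈ insert i s, (f (u j) - f (l j))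
        = (f (u i) - f (l i)) + ∑ j ∈ s, (f (u j) - f (l j)) := sum_insert his
      _ ≤ (f (u i) - f (l i)) + (f (l i) - f a) := by gcongr
      _ = f (u i) - f a := sub_add_sub_cancel _ _ _
      _ ≤ f c - f a := sub_le_sub_right
          (hf ⟨hai.trans hiu, huc⟩ (right_mem_Icc.2 hac) huc) _

theorem Finset.sum_range_mul_eq_sum_sum {M : Type*} [AddCommMonoid M] (g : ℕ → M) (a b : ℕ) :
    ∑ j ∈ range (a * b), g j = ∑ i ∈ range a, ∑ k ∈ range b, g (k + b * i) := by
  rw [← Fin.sum_univ_eq_sum_range, ← finProdFinEquiv.sum_comp, Fintype.sum_prod_type]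
  simp only [finProdFinEquiv_apply_val]
  rw [← Fin.sum_univ_eq_sum_range (fun i => ∑ k ∈ range b, g (k + b * i))]
  simp only [← Fin.sum_univ_eq_sum_range (fun k => g (k + b * _))]

theorem add_div_mem_Icc {w : ℝ} (hw : w ∈ Icc (0 : ℝ) 1) {r N : ℕ} (hr : r < N) :
    (w + r) / N ∈ Icc (0 : ℝ) 1 := by
  have hrN : (r : ℝ) + 1 ≤ N := by exact_mod_cast hr
  constructor
  · exact div_nonneg (by linarith [hw.1, r.cast_nonneg (α := ℝ)]) (N.cast_nonneg)
  · rw [div_le_one (by linarith [r.cast_nonneg (α := ℝ)])]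
    linarith [hw.2]

theorem sub_eq_sum_range_pow_of_functionalEq {p : ℕ} (hp : 0 < p) {φ : ℝ → ℝ}
    (hFE : ∀ x ∈ Icc (0 : ℝ) 1,
      φ x = ∑ k ∈ range p, (φ ((x + k) / p) - φ ((k : ℝ) / p)))
    (m : ℕ) {u v : ℝ} (hu : u ∈ Icc (0 : ℝ) 1) (hv : v ∈ Icc (0 : ℝ) 1) :
    φ v - φ u = ∑ r ∈ range (p ^ m), (φ ((v + r) / (p : ℝ) ^ m) - φ ((u + r) / (p : ℝ) ^ m)) := by
  induction m generalizing u v with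
  | zero => simp
  | succ m ih =>
    have hrescale : ∀ (w : ℝ) (k r : ℕ), ((w + k) / p + r) / (p : ℝ) ^ m
        = (w + (k + p * r : ℕ)) / (p : ℝ) ^ (m + 1) := fun w k r => by
      push_cast
      field_simp
      ring
    calc φ v - φ u = ∑ k ∈ range p, (φ ((v + k) / p) - φ ((u + k) / p)) := by
          rw [hFE v hv, hFE u hu, ← sum_sub_distrib]
          exact sum_congr rfl fun k _ => by ring
      _ = ∑ k ∈ range p, ∑ r ∈ range (p ^ m), (φ ((v + (k + p * r : ℕ)) / (p : ℝ) ^ (m + 1))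
            - φ ((u + (k + p * r : ℕ)) / (p : ℝ) ^ (m + 1))) := by
          refine sum_congr rfl fun k hk => ?_
          have hk := mem_range.1 hk
          simp only [ih (add_div_mem_Icc hu hk) (add_div_mem_Icc hv hk), hrescale]
      _ = _ := by
          rw [sum_comm, pow_succ p m, sum_range_mul_eq_sum_sum (fun j : ℕ =>
            φ ((v + j) / (p : ℝ) ^ (m + 1)) - φ ((u + j) / (p : ℝ) ^ (m + 1)))]

theorem mem_padicD_of_add_mul_pow_eq {p k r s : ℕ} {x : ℝ} (hp : 2 ≤ p) (hk : 1 ≤ k)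
    (hx0 : 0 ≤ x) (hx1 : x < 1) (h : (x + r) * (p : ℝ) ^ k = x + s) : x ∈ padicD p := by
  have hN : 2 ≤ p ^ k := hp.trans (Nat.le_self_pow (by omega) p)
  have hNR : (2 : ℝ) ≤ (p : ℝ) ^ k := by exact_mod_cast hN
  have hx : x * ((p : ℝ) ^ k - 1) = s - (p : ℝ) ^ k * r := by linear_combination h
  have hrs : p ^ k * r ≤ s := by
    have : ((p ^ k * r : ℕ) : ℝ) ≤ s := by push_cast; nlinarith
    exact_mod_cast this
  have hlt : s - p ^ k * r < p ^ k - 1 := by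
    have : ((s - p ^ k * r : ℕ) : ℝ) < ((p ^ k - 1 : ℕ) : ℝ) := by
      rw [Nat.cast_sub hrs, Nat.cast_sub (by omega)]
      push_cast
      nlinarith
    exact_mod_cast this
  refine ⟨k, hk, s - p ^ k * r, by omega, ?_⟩
  rw [eq_div_iff (by linarith), Nat.cast_sub hrs]
  push_cast
  linarith

theorem injective_add_div_pow {p : ℕ} (hp : 2 ≤ p) {x : ℝ} (hx0 : 0 ≤ x) (hx1 : x < 1)
    (hxD : x ∉ padicD p) : Function.Injective fun i : ℕ × ℕ => (x + i.2) / (p : ℝ) ^ i.1 := by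
  have hlevel : ∀ m n r s : ℕ, m < n → (x + r) / (p : ℝ) ^ m ≠ (x + s) / (p : ℝ) ^ n := by
    intro m n r s hmn h
    obtain ⟨k, rfl⟩ := Nat.exists_eq_add_of_lt hmn
    refine hxD (mem_padicD_of_add_mul_pow_eq (k := k + 1) (r := r) (s := s) hp (by omega)
      hx0 hx1 ?_)
    rw [div_eq_div_iff (by positivity) (by positivity)] at h
    have hpm : (p : ℝ) ^ m ≠ 0 := by positivity
    apply mul_right_cancel₀ hpm
    rw [← h]
    ring
  rintro ⟨m, r⟩ ⟨n, s⟩ h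
  simp only at h
  rcases lt_trichotomy m n with hmn | rfl | hmn
  · exact absurd h (hlevel m n r s hmn)
  · rw [div_left_inj' (by positivity), add_right_inj, Nat.cast_inj] at h
    rw [h]
  · exact absurd h.symm (hlevel n m s r hmn)

theorem continuousWithinAt_Ioi_of_forall_nat_mul_sub_le {f : ℝ → ℝ} {x C : ℝ}
    (hle : ∀ᶠ y in 𝓝[>] x, f x ≤ f y) (h : ∀ M : ℕ, ∀ᶠ y in 𝓝[>] x, M * (f y - f x) ≤ C) :
    ContinuousWithinAt f (Ioi x) x := by
  refine tendsto_order.2 ⟨fun a ha => hle.mono fun y hy => ha.trans_le hy, fun b hb => ?_⟩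
  obtain ⟨M, hM⟩ := exists_nat_gt (C / (b - f x))
  rw [div_lt_iff₀ (sub_pos.2 hb)] at hM
  filter_upwards [h M] with y hy
  have : (M : ℝ) * (f y - f x) < M * (b - f x) := hy.trans_lt hM
  linarith [lt_of_mul_lt_mul_left this M.cast_nonneg]

theorem eventually_nat_mul_sub_le_of_notMem_padicD {p : ℕ} (hp : 2 ≤ p) {φ : ℝ → ℝ}
    (hmono : MonotoneOn φ (Icc 0 1))
    (hFE : ∀ x ∈ Icc (0 : ℝ) 1,
      φ x = ∑ k ∈ range p, (φ ((x + k) / p) - φ ((k : ℝ) / p)))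
    {x : ℝ} (hx0 : 0 ≤ x) (hx1 : x < 1) (hxD : x ∉ padicD p) (M : ℕ) :
    ∀ᶠ y in 𝓝[>] x, M * (φ y - φ x) ≤ φ 1 - φ 0 := by
  classical
  set A := (Finset.Icc 1 M).sigma fun m => range (p ^ m)
  set l : (Σ _ : ℕ, ℕ) → ℝ := fun i => (x + i.2) / (p : ℝ) ^ i.1
  have hl : Function.Injective l := (injective_add_div_pow hp hx0 hx1 hxD).comp
    (Equiv.sigmaEquivProd ℕ ℕ).injective
  have hgap : ∀ i ∈ A, ∀ j ∈ A, ∀ᶠ y in 𝓝[>] x, l i < l j → y - x < l j - l i := by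
    intro i _ j _
    by_cases hij : l i < l j
    · filter_upwards [Ioo_mem_nhdsGT (show x < x + (l j - l i) by linarith)] with y hy _
      linarith [hy.2]
    · exact Eventually.of_forall fun _ h => absurd h hij
  filter_upwards [Ioo_mem_nhdsGT hx1, (eventually_all_finset A).2 fun i hi =>
    (eventually_all_finset A).2 (hgap i hi)] with y hy hgapy
  have hx : x ∈ Icc (0 : ℝ) 1 := ⟨hx0, hx1.le⟩
  have hy' : y ∈ Icc (0 : ℝ) 1 := ⟨hx0.trans hy.1.le, hy.2.le⟩
  set u : (Σ _ : ℕ, ℕ) → ℝ := fun i => (y + i.2) / (p : ℝ) ^ i.1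
  have hmem : ∀ w ∈ Icc (0 : ℝ) 1, ∀ i ∈ A, (w + i.2) / (p : ℝ) ^ i.1 ∈ Icc (0 : ℝ) 1 := by
    intro w hw i hi
    simpa using add_div_mem_Icc hw (mem_range.1 (mem_sigma.1 hi).2)
  have hul : ∀ i, u i ≤ l i + (y - x) := fun i => by
    have hpow : (1 : ℝ) ≤ (p : ℝ) ^ i.1 := one_le_pow₀ (by exact_mod_cast (by omega : 1 ≤ p))
    calc u i = l i + (y - x) / (p : ℝ) ^ i.1 := by simp only [u, l]; ring
      _ ≤ l i + (y - x) := by gcongr; exact div_le_self (by linarith [hy.1]) hpow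
  have hdisj : (A : Set (Σ _ : ℕ, ℕ)).Pairwise fun i j => u i < l j ∨ u j < l i := by
    intro i hi j hj hij
    rcases lt_or_gt_of_ne (hl.ne hij) with h | h
    · exact Or.inl ((hul i).trans_lt (by linarith [hgapy i hi j hj h]))
    · exact Or.inr ((hul j).trans_lt (by linarith [hgapy j hj i hi h]))
  have hbound := hmono.sum_sub_le_sub zero_le_one A (l := l) (u := u) (fun i hi =>
    ⟨(hmem x hx i hi).1, by simp only [l, u]; gcongr; exact hy.1.le, (hmem y hy' i hi).2⟩) hdisj
  have hlevels : ∑ i ∈ A, (φ (u i) - φ (l i)) = M * (φ y - φ x) := by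
    rw [sum_sigma, sum_congr rfl fun m _ =>
      (sub_eq_sum_range_pow_of_functionalEq (by omega) hFE m hx hy').symm,
      sum_const, Nat.card_Icc, add_tsub_cancel_right, nsmul_eq_mul]
  linarith

theorem stmt6_general (p : ℕ) (hp : 2 ≤ p) (φ : ℝ → ℝ)
    (hmono : MonotoneOn φ (Set.Icc 0 1))
    (hlc : ∀ x ∈ Set.Icc (0:ℝ) 1, ContinuousWithinAt φ (Set.Iic x) x)
    (hFE : ∀ x ∈ Set.Icc (0:ℝ) 1,
      φ x = ∑ k ∈ Finset.range p, (φ ((x + k) / p) - φ ((k : ℝ) / p))) :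
    ∀ x ∈ Set.Icc (0:ℝ) 1, x ∉ padicD p → ContinuousWithinAt φ (Set.Icc 0 1) x := by
  intro x hx hxD
  rcases hx.2.eq_or_lt with rfl | hx1
  · exact (hlc 1 hx).mono fun y hy => hy.2
  have hle : ∀ᶠ y in 𝓝[>] x, φ x ≤ φ y := by
    filter_upwards [Ioo_mem_nhdsGT hx1] with y hy
    exact hmono hx ⟨hx.1.trans hy.1.le, hy.2.le⟩ hy.1.le
  have hright := continuousWithinAt_Ioi_of_forall_nat_mul_sub_le hle
    (eventually_nat_mul_sub_le_of_notMem_padicD hp hmono hFE hx.1 hx1 hxD)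
  exact (continuousAt_iff_continuous_left_right.2
    ⟨hlc x hx, continuousWithinAt_Ioi_iff_Ici.1 hright⟩).continuousWithinAt

/-- every non-decreasing left-continuous solution φ of the
functional equation with φ(0)=0, φ(1)=1 is continuous at every point of [0,1] \ D. -/
theorem stmt6 (p : ℕ) (hp : 2 ≤ p) (φ : ℝ → ℝ)
    (hmono : MonotoneOn φ (Set.Icc 0 1))
    (hrange : ∀ x ∈ Set.Icc (0:ℝ) 1, φ x ∈ Set.Icc (0:ℝ) 1)
    (h0 : φ 0 = 0) (h1 : φ 1 = 1)
    (hlc : ∀ x ∈ Set.Icc (0:ℝ) 1, ContinuousWithinAt φ (Set.Iic x) x)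
    (hFE : ∀ x ∈ Set.Icc (0:ℝ) 1,
      φ x = ∑ k ∈ Finset.range p, (φ ((x + k) / p) - φ ((k : ℝ) / p))) :
    ∀ x ∈ Set.Icc (0:ℝ) 1, x ∉ padicD p → ContinuousWithinAt φ (Set.Icc 0 1) x :=
  stmt6_general p hp φ hmono hlc hFE
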